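/- Let (X,f) be a topological dynamical system with X having at least two points. If (X,f) is multi-transitive, then there exist δ > 0 and a dense Mycielski subset C of X (a countable union of Cantor sets) such that C is δ-scrambled: every pair of distinct points x, y ∈ C satisfies limsup_{n→∞} d(f^n(x), f^n(y)) > δ and liminf_{n→∞} d(f^n(x), f^n(y)) = 0. -/

import Mathlib

open Function Set Filter Topology MeasureTheory

/-- A topological dynamical system `f : X → X` is (topologically) transitive if for every
two non-empty open subsets `U`, `V` there exists `n ≥ 1` with `f^[n] '' U ∩ V ≠ ∅`. -/
def IsTopTransitive {X : Type*} [TopologicalSpace X] (f : X → X) : Prop :=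
  ∀ U V : Set X, IsOpen U → IsOpen V → U.Nonempty → V.Nonempty →
    ∃ n : ℕ, 1 ≤ n ∧ (f^[n] '' U ∩ V).Nonempty

/-- Multi-transitivity with respect to a vector `a = (a₁, …, a_r)`: the product system
`(X^r, f^{a₁} × ⋯ × f^{a_r})` is transitive. -/
def MultiTransWrt {X : Type*} [TopologicalSpace X] (f : X → X) {r : ℕ} (a : Fin r → ℕ) : Prop :=
  IsTopTransitive (fun x : Fin r → X => fun i => f^[a i] (x i))

/-- `(X, f)` is multi-transitive if it is multi-transitive with respect to `(1, 2, …, n)`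
for every `n ≥ 1`. -/
def MultiTrans {X : Type*} [TopologicalSpace X] (f : X → X) : Prop :=
  ∀ n : ℕ, 1 ≤ n → MultiTransWrt f (fun i : Fin n => (i : ℕ) + 1)

/-- `(X, f)` is strongly multi-transitive if it is multi-transitive with respect to every
vector of positive integers. -/
def StrongMultiTrans {X : Type*} [TopologicalSpace X] (f : X → X) : Prop :=
  ∀ r : ℕ, 1 ≤ r → ∀ a : Fin r → ℕ, (∀ i, 1 ≤ a i) → MultiTransWrt f a

/-- The hitting time set `N(U, V) = {n ≥ 1 : f^[n] '' U ∩ V ≠ ∅}`. -/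
def HittingTimes {X : Type*} [TopologicalSpace X] (f : X → X) (U V : Set X) : Set ℕ :=
  {n : ℕ | 1 ≤ n ∧ (f^[n] '' U ∩ V).Nonempty}

/-- A Cantor set is a subset homeomorphic to the Cantor space. -/
def IsCantorSet {X : Type*} [TopologicalSpace X] (s : Set X) : Prop :=
  Nonempty ((ℕ → Bool) ≃ₜ s)

/-
Write `ρₙ(x, y) = dist (fⁿ x) (fⁿ y)`. Simultaneous hitting at the rates `m, 2m, …, Nm` gives,
for any nonempty open `U`, `V` and at arbitrarily late times `n`, pairs `(x, y) ∈ U × V` with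
* `ρₙ(x, y) < ε`: by pigeonhole among `N + 1` points of an `f^m`-orbit, some point `u` has
  `dist u (f^{dm} u) < ε` with `1 ≤ d ≤ N`, and `dm` is a hitting time of `(U, V)`;
* `ρₙ(x, y) > δ := dist p q / 8` for fixed `p ≠ q`: otherwise `fⁿ U` is eventually `2δ`-small,
  and the rates `m, 2m, 3m` sending `U` near `p` and near `q` produce a point `u` with
  `dist u (f^m u) > δ`, where `m` is a hitting time of `(U, V)`.
In both cases transitivity carries `u` to some `fⁿ x` with `x ∈ U ∩ f^{-c} V`, and
`(x, f^c x)` is the required pair. So the relations "`ρₙ < 1 / (j + 1)` for some `n ≥ j`" and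
"`ρₙ > δ` for some `n ≥ j`" are open and dense in `X × X`, and a Mycielski-type Cantor scheme,
refined stage by stage over finitely many cells, puts inside each basic open set a Cantor set
such that any two distinct points of their union lie in all of these relations.
-/

open Metric

section Transitivity

variable {Y : Type*} [TopologicalSpace Y] {g : Y → Y}

theorem IsTopTransitive.frequently_inter_preimage_nonempty (hg : Continuous g)
    (ht : IsTopTransitive g) {U V : Set Y} (hU : IsOpen U) (hV : IsOpen V) (hUne : U.Nonempty)
    (hVne : V.Nonempty) : ∃ᶠ n in atTop, (U ∩ g^[n] ⁻¹' V).Nonempty := by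
  rw [frequently_atTop]
  intro k
  induction k with
  | zero =>
    obtain ⟨n, -, hn⟩ := ht U V hU hV hUne hVne
    exact ⟨n, n.zero_le, image_inter_nonempty_iff.1 hn⟩
  | succ k ih =>
    obtain ⟨n, hkn, hW⟩ := ih
    have hWo : IsOpen (U ∩ g^[n] ⁻¹' V) := hU.inter (hV.preimage (hg.iterate n))
    -- a return of `U ∩ g^[n] ⁻¹' V` to itself after `s ≥ 1` steps is a hit of `V` at time `n + s`
    obtain ⟨s, hs, hsW⟩ := ht _ _ hWo hWo hW hW
    obtain ⟨y, ⟨hyU, -⟩, -, hyV⟩ := image_inter_nonempty_iff.1 hsW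
    exact ⟨n + s, by omega, y, hyU, by rwa [mem_preimage, iterate_add_apply]⟩

end Transitivity

theorem iterate_pi_iterate {ι X : Type*} (f : X → X) (a : ι → ℕ) (m : ℕ) (x : ι → X) :
    (fun x : ι → X => fun i => f^[a i] (x i))^[m] x = fun i => f^[a i * m] (x i) := by
  induction m with
  | zero => rfl
  | succ m ih =>
    rw [iterate_succ_apply', ih]
    funext i
    rw [Nat.mul_succ, add_comm, iterate_add_apply]

section MultiTransitivity

variable {X : Type*} [TopologicalSpace X] {f : X → X}

theorem MultiTrans.frequently_forall_inter_preimage_nonempty (hf : Continuous f)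
    (hmt : MultiTrans f) {r : ℕ} {U V : Fin r → Set X} (hU : ∀ i, IsOpen (U i))
    (hV : ∀ i, IsOpen (V i)) (hUne : ∀ i, (U i).Nonempty) (hVne : ∀ i, (V i).Nonempty) :
    ∃ᶠ m in atTop, ∀ i : Fin r, (U i ∩ f^[((i : ℕ) + 1) * m] ⁻¹' V i).Nonempty := by
  rcases Nat.eq_zero_or_pos r with rfl | hr
  · exact Frequently.of_forall fun _ i => i.elim0
  have hΦ : Continuous fun x : Fin r → X => fun i : Fin r => f^[(i : ℕ) + 1] (x i) :=
    continuous_pi fun i => (hf.iterate _).comp (continuous_apply i)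
  refine ((hmt r hr).frequently_inter_preimage_nonempty hΦ
    (isOpen_set_pi finite_univ fun i _ => hU i) (isOpen_set_pi finite_univ fun i _ => hV i)
    (univ_pi_nonempty_iff.2 hUne) (univ_pi_nonempty_iff.2 hVne)).mono ?_
  rintro m ⟨x, hxU, hxV⟩ i
  rw [mem_preimage, iterate_pi_iterate] at hxV
  exact ⟨x i, hxU i trivial, hxV i trivial⟩

theorem MultiTrans.frequently_inter_preimage_nonempty (hf : Continuous f) (hmt : MultiTrans f)
    {U V : Set X} (hU : IsOpen U) (hV : IsOpen V) (hUne : U.Nonempty) (hVne : V.Nonempty) :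
    ∃ᶠ n in atTop, (U ∩ f^[n] ⁻¹' V).Nonempty :=
  (hmt.frequently_forall_inter_preimage_nonempty hf (r := 1) (fun _ => hU) (fun _ => hV)
    (fun _ => hUne) (fun _ => hVne)).mono fun _ h => by simpa using h 0

end MultiTransitivity

theorem exists_dist_iterate_lt {X : Type*} [PseudoMetricSpace X] [CompactSpace X] [Nonempty X]
    {ε : ℝ} (hε : 0 < ε) : ∃ N : ℕ, ∀ g : X → X, ∃ x, ∃ d ∈ Icc 1 N, dist x (g^[d] x) < ε := by
  obtain ⟨T, -, hT, hcover⟩ := finite_cover_balls_of_compact (isCompact_univ (X := X)) (half_pos hε)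
  refine ⟨hT.toFinset.card, fun g => ?_⟩
  let w : X := Classical.arbitrary X
  have hcenter : ∀ i, ∃ z ∈ hT.toFinset, dist (g^[i] w) z < ε / 2 := fun i => by
    simpa using hcover (mem_univ (g^[i] w))
  choose c hcT hc using hcenter
  -- pigeonhole: two of the `N + 1` points `g^[i] w`, `i ≤ N`, share an `ε / 2`-ball
  obtain ⟨i, hi, j, hj, hij, hcij⟩ := Finset.exists_ne_map_eq_of_card_lt_of_maps_to
    (s := Finset.range (hT.toFinset.card + 1)) (by simp) fun i _ => hcT i
  wlog hlt : i < j generalizing i j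
  · exact this j hj i hi hij.symm hcij.symm (lt_of_le_of_ne (not_lt.1 hlt) hij.symm)
  simp only [Finset.mem_range] at hj
  refine ⟨g^[i] w, j - i, ⟨by omega, by omega⟩, ?_⟩
  rw [← iterate_add_apply, Nat.sub_add_cancel hlt.le]
  calc dist (g^[i] w) (g^[j] w) ≤ dist (g^[i] w) (c i) + dist (g^[j] w) (c j) := by
        rw [hcij, dist_comm (g^[j] w)]; exact dist_triangle _ _ _
    _ < ε / 2 + ε / 2 := add_lt_add (hc i) (hc j)
    _ = ε := add_halves ε

section Pairs

variable {X : Type*} [PseudoMetricSpace X] {f : X → X}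

theorem MultiTrans.frequently_dist_iterate_mem (hf : Continuous f) (hmt : MultiTrans f)
    {U V : Set X} (hU : IsOpen U) (hV : IsOpen V) {c : ℕ} (hc : (U ∩ f^[c] ⁻¹' V).Nonempty)
    {S : Set ℝ} (hS : IsOpen S) {u : X} (hu : dist u (f^[c] u) ∈ S) :
    ∃ᶠ n in atTop, ∃ x ∈ U, ∃ y ∈ V, dist (f^[n] x) (f^[n] y) ∈ S := by
  have hE : IsOpen ((fun u => dist u (f^[c] u)) ⁻¹' S) :=
    hS.preimage (continuous_id.dist (hf.iterate c))
  refine (hmt.frequently_inter_preimage_nonempty hf (hU.inter (hV.preimage (hf.iterate c))) hE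
    hc ⟨u, hu⟩).mono ?_
  rintro n ⟨x, ⟨hxU, hxV⟩, hx⟩
  refine ⟨x, hxU, f^[c] x, hxV, ?_⟩
  rwa [(Commute.iterate_iterate_self f n c).eq]

theorem MultiTrans.frequently_dist_iterate_lt [CompactSpace X] (hf : Continuous f)
    (hmt : MultiTrans f) {U V : Set X} (hU : IsOpen U) (hV : IsOpen V) (hUne : U.Nonempty)
    (hVne : V.Nonempty) {ε : ℝ} (hε : 0 < ε) :
    ∃ᶠ n in atTop, ∃ x ∈ U, ∃ y ∈ V, dist (f^[n] x) (f^[n] y) < ε := by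
  have : Nonempty X := ⟨hUne.some⟩
  obtain ⟨N, hN⟩ := exists_dist_iterate_lt (X := X) hε
  obtain ⟨m, hm⟩ := (hmt.frequently_forall_inter_preimage_nonempty hf (r := N) (fun _ => hU)
    (fun _ => hV) (fun _ => hUne) (fun _ => hVne)).exists
  obtain ⟨u, d, ⟨hd1, hdN⟩, hu⟩ := hN f^[m]
  rw [← iterate_mul, mul_comm] at hu
  have hc : (U ∩ f^[d * m] ⁻¹' V).Nonempty := by
    simpa [Nat.sub_add_cancel hd1] using hm ⟨d - 1, by omega⟩
  exact hmt.frequently_dist_iterate_mem hf hU hV hc isOpen_Iio hu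

theorem MultiTrans.frequently_three_hits (hf : Continuous f) (hmt : MultiTrans f)
    {U V₁ V₂ V₃ : Set X} (hU : IsOpen U) (hV₁ : IsOpen V₁) (hV₂ : IsOpen V₂) (hV₃ : IsOpen V₃)
    (hUne : U.Nonempty) (hV₁ne : V₁.Nonempty) (hV₂ne : V₂.Nonempty) (hV₃ne : V₃.Nonempty) :
    ∃ᶠ m in atTop, (U ∩ f^[m] ⁻¹' V₁).Nonempty ∧ (U ∩ f^[2 * m] ⁻¹' V₂).Nonempty ∧
      (U ∩ f^[3 * m] ⁻¹' V₃).Nonempty := by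
  let W : Fin 3 → Set X := ![V₁, V₂, V₃]
  have hW : ∀ i, IsOpen (W i) := by
    intro i; fin_cases i
    exacts [hV₁, hV₂, hV₃]
  have hWne : ∀ i, (W i).Nonempty := by
    intro i; fin_cases i
    exacts [hV₁ne, hV₂ne, hV₃ne]
  refine (hmt.frequently_forall_inter_preimage_nonempty hf (U := fun _ => U) (fun _ => hU) hW
    (fun _ => hUne) hWne).mono fun m hm => ?_
  simpa [W] using And.intro (hm 0) (And.intro (hm 1) (hm 2))

end Pairs

theorem MultiTrans.exists_pos_frequently_lt_dist_iterate {X : Type*} [MetricSpace X]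
    [Nontrivial X] {f : X → X} (hf : Continuous f) (hmt : MultiTrans f) :
    ∃ δ > 0, ∀ U V : Set X, IsOpen U → IsOpen V → U.Nonempty → V.Nonempty →
      ∃ᶠ n in atTop, ∃ x ∈ U, ∃ y ∈ V, δ < dist (f^[n] x) (f^[n] y) := by
  obtain ⟨p, q, hpq⟩ := exists_pair_ne X
  have hD : 0 < dist p q / 8 := by have := dist_pos.2 hpq; positivity
  refine ⟨dist p q / 8, hD, fun U V hU hV hUne hVne => ?_⟩
  by_contra hcon
  obtain ⟨k, hk⟩ := eventually_atTop.1 (not_frequently.1 hcon)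
  push Not at hk
  obtain ⟨y₀, hy₀⟩ := hVne
  obtain ⟨m, hkm, ⟨x₁, hx₁U, hx₁V⟩, ⟨x₂, hx₂U, hx₂p⟩, ⟨x₃, hx₃U, hx₃q⟩⟩ :=
    frequently_atTop.1 (hmt.frequently_three_hits hf (V₂ := ball p (dist p q / 8))
      (V₃ := ball q (dist p q / 8)) hU hV isOpen_ball isOpen_ball hUne ⟨y₀, hy₀⟩
      (nonempty_ball.2 hD) (nonempty_ball.2 hD)) k
  rw [mem_preimage, mem_ball, dist_comm] at hx₂p
  rw [mem_preimage, mem_ball] at hx₃q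
  -- all of `f^[3m] U` is `2δ`-close to `f^[3m] y₀`, so `f^[m]` moves the point `f^[2m] x₂`
  -- near `p` to the point `f^[3m] x₂` near `q`
  have h₂₃ : dist (f^[3 * m] x₂) (f^[3 * m] x₃) ≤ dist p q / 8 + dist p q / 8 := by
    refine (dist_triangle _ (f^[3 * m] y₀) _).trans (add_le_add ?_ ?_)
    · exact hk _ (by omega) _ hx₂U _ hy₀
    · rw [dist_comm]; exact hk _ (by omega) _ hx₃U _ hy₀
  have hz : dist p q / 8 < dist (f^[2 * m] x₂) (f^[m] (f^[2 * m] x₂)) := by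
    rw [← iterate_add_apply, show m + 2 * m = 3 * m by ring]
    linarith [dist_triangle4 p (f^[2 * m] x₂) (f^[3 * m] x₂) q,
      dist_triangle (f^[3 * m] x₂) (f^[3 * m] x₃) q]
  obtain ⟨n, hkn, x, hx, y, hy, hxy⟩ := frequently_atTop.1
    (hmt.frequently_dist_iterate_mem hf hU hV ⟨x₁, hx₁U, hx₁V⟩ isOpen_Ioi hz) k
  exact (hk n hkn x hx y hy).not_gt hxy

section OrbitDistPairs

variable {X : Type*} [PseudoMetricSpace X]

def orbitDistPairs (f : X → X) (S : Set ℝ) (j : ℕ) : Set (X × X) :=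
  {z | ∃ n ≥ j, dist (f^[n] z.1) (f^[n] z.2) ∈ S}

variable {f : X → X} {S : Set ℝ}

theorem isOpen_orbitDistPairs (hf : Continuous f) (hS : IsOpen S) (j : ℕ) :
    IsOpen (orbitDistPairs f S j) := by
  have : orbitDistPairs f S j = ⋃ n ≥ j, (fun z : X × X => dist (f^[n] z.1) (f^[n] z.2)) ⁻¹' S := by
    ext; simp [orbitDistPairs]
  rw [this]
  exact isOpen_biUnion fun n _ => hS.preimage
    (((hf.iterate n).comp continuous_fst).dist ((hf.iterate n).comp continuous_snd))

theorem dense_orbitDistPairs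
    (h : ∀ U V : Set X, IsOpen U → IsOpen V → U.Nonempty → V.Nonempty →
      ∃ᶠ n in atTop, ∃ x ∈ U, ∃ y ∈ V, dist (f^[n] x) (f^[n] y) ∈ S) (j : ℕ) :
    Dense (orbitDistPairs f S j) := by
  refine dense_iff_inter_open.2 fun W hW ⟨⟨a, b⟩, hab⟩ => ?_
  obtain ⟨U, V, hU, hV, ha, hb, hUV⟩ := isOpen_prod_iff.1 hW a b hab
  obtain ⟨n, hn, x, hx, y, hy, hxy⟩ := frequently_atTop.1 (h U V hU hV ⟨a, ha⟩ ⟨b, hb⟩) j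
  exact ⟨(x, y), hUV ⟨hx, hy⟩, n, hn, hxy⟩

variable [CompactSpace X] {x y : X}

theorem isBoundedUnder_dist_iterate :
    IsBoundedUnder (· ≤ ·) atTop fun n => dist (f^[n] x) (f^[n] y) :=
  isBoundedUnder_of ⟨diam (univ : Set X), fun _ =>
    dist_le_diam_of_mem isCompact_univ.isBounded (mem_univ _) (mem_univ _)⟩

theorem le_limsup_dist_iterate {δ : ℝ} (h : ∀ j, (x, y) ∈ orbitDistPairs f (Ioi δ) j) :
    δ ≤ limsup (fun n => dist (f^[n] x) (f^[n] y)) atTop :=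
  le_limsup_of_frequently_le (frequently_atTop.2 fun j =>
    let ⟨n, hn, hδ⟩ := h j; ⟨n, hn, le_of_lt hδ⟩) isBoundedUnder_dist_iterate

theorem liminf_dist_iterate_eq_zero
    (h : ∀ j : ℕ, (x, y) ∈ orbitDistPairs f (Iio (1 / (j + 1))) j) :
    liminf (fun n => dist (f^[n] x) (f^[n] y)) atTop = 0 := by
  refine le_antisymm (le_of_forall_pos_le_add fun ε hε => ?_)
    (le_liminf_of_le isBoundedUnder_dist_iterate.isCoboundedUnder_ge
      (Eventually.of_forall fun _ => dist_nonneg))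
  obtain ⟨J, hJ⟩ := exists_nat_one_div_lt hε
  rw [zero_add]
  refine liminf_le_of_frequently_le (frequently_atTop.2 fun a => ?_)
    (isBoundedUnder_of ⟨0, fun _ => dist_nonneg⟩)
  obtain ⟨n, hn, hlt⟩ := h (max a J)
  have hJa : 1 / ((max a J : ℕ) + 1 : ℝ) ≤ 1 / (J + 1) :=
    one_div_le_one_div_of_le (by positivity) (by exact_mod_cast Nat.succ_le_succ (le_max_right a J))
  exact ⟨n, le_of_max_le_left hn, (hlt.trans_le hJa).le.trans hJ.le⟩

end OrbitDistPairs

theorem exists_seq_of_forall_exists_succ {α : Type*} {p : α → Prop} {r : ℕ → α → α → Prop}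
    (h₀ : ∃ a, p a) (h : ∀ t a, p a → ∃ b, p b ∧ r t a b) :
    ∃ F : ℕ → α, ∀ t, p (F t) ∧ r t (F t) (F (t + 1)) := by
  obtain ⟨a₀, ha₀⟩ := h₀
  choose g hg using h
  let F : ℕ → {a // p a} := fun t =>
    Nat.rec ⟨a₀, ha₀⟩ (fun t a => ⟨g t a a.2, (hg t a a.2).1⟩) t
  exact ⟨fun t => (F t).1, fun t => ⟨(F t).2, (hg t _ (F t).2).2⟩⟩

theorem CantorScheme.exists_continuous_forall_mem {β α : Type*} [TopologicalSpace β]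
    [DiscreteTopology β] [PseudoMetricSpace α] [CompleteSpace α] {A : List β → Set α}
    (hanti : ClosureAntitone A) (hdiam : VanishingDiam A) (hne : ∀ l, (A l).Nonempty) :
    ∃ g : (ℕ → β) → α, Continuous g ∧ ∀ σ n, g σ ∈ A (PiNat.res σ n) := by
  have hdom : ∀ σ, σ ∈ (inducedMap A).1 := fun σ => by
    rw [hanti.map_of_vanishingDiam hdiam hne]
    exact mem_univ σ
  exact ⟨fun σ => (inducedMap A).2 ⟨σ, hdom σ⟩, hdiam.map_continuous.comp (by fun_prop),
    fun σ n => map_mem ⟨σ, hdom σ⟩ n⟩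

section Refinement

variable {X : Type*}

theorem exists_isOpen_prod_subset_of_dense {Y : Type*} [TopologicalSpace X] [TopologicalSpace Y]
    {R : Set (X × Y)} (hRo : IsOpen R) (hRd : Dense R) {U : Set X} {V : Set Y} (hU : IsOpen U)
    (hV : IsOpen V) (hUne : U.Nonempty) (hVne : V.Nonempty) :
    ∃ U' ⊆ U, ∃ V' ⊆ V, IsOpen U' ∧ IsOpen V' ∧ U'.Nonempty ∧ V'.Nonempty ∧ U' ×ˢ V' ⊆ R := by
  obtain ⟨⟨x, y⟩, ⟨hx, hy⟩, hxyR⟩ := hRd.inter_open_nonempty _ (hU.prod hV) (hUne.prod hVne)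
  obtain ⟨P, Q, hP, hQ, hxP, hyQ, hPQ⟩ := isOpen_prod_iff.1 hRo x y hxyR
  exact ⟨U ∩ P, inter_subset_left, V ∩ Q, inter_subset_left, hU.inter hP, hV.inter hQ,
    ⟨x, hx, hxP⟩, ⟨y, hy, hyQ⟩, (prod_mono inter_subset_right inter_subset_right).trans hPQ⟩

theorem exists_subset_forall_prod_subset_of_dense {ι : Type*} [TopologicalSpace X]
    {R : Set (X × X)} (hRo : IsOpen R) (hRd : Dense R) {A : ι → Set X}
    (hAo : ∀ i, IsOpen (A i)) (hAne : ∀ i, (A i).Nonempty) (P : Finset (ι × ι)) :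
    ∃ A' : ι → Set X, (∀ i, A' i ⊆ A i ∧ IsOpen (A' i) ∧ (A' i).Nonempty) ∧
      ∀ p ∈ P, p.1 ≠ p.2 → A' p.1 ×ˢ A' p.2 ⊆ R := by
  classical
  induction P using Finset.induction_on with
  | empty => exact ⟨A, fun i => ⟨subset_rfl, hAo i, hAne i⟩, by simp⟩
  | insert p P _ ih =>
    obtain ⟨A', hA', hP⟩ := ih
    by_cases hp : p.1 = p.2
    · refine ⟨A', hA', fun q hq hq' => ?_⟩
      rcases Finset.mem_insert.1 hq with rfl | hq
      exacts [absurd hp hq', hP q hq hq']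
    obtain ⟨U, hUA, V, hVA, hUo, hVo, hUne, hVne, hUV⟩ := exists_isOpen_prod_subset_of_dense hRo
      hRd (hA' p.1).2.1 (hA' p.2).2.1 (hA' p.1).2.2 (hA' p.2).2.2
    let A'' : ι → Set X := fun i => if i = p.1 then U else if i = p.2 then V else A' i
    have hA'' : ∀ i, A'' i ⊆ A' i ∧ IsOpen (A'' i) ∧ (A'' i).Nonempty := fun i => by
      dsimp only [A'']
      split_ifs with h₁ h₂
      exacts [h₁ ▸ ⟨hUA, hUo, hUne⟩, h₂ ▸ ⟨hVA, hVo, hVne⟩, ⟨subset_rfl, (hA' i).2⟩]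
    refine ⟨A'', fun i => ⟨(hA'' i).1.trans (hA' i).1, (hA'' i).2⟩, fun q hq hq' => ?_⟩
    rcases Finset.mem_insert.1 hq with rfl | hq
    · simpa [A'', Ne.symm hp] using hUV
    · exact (prod_mono (hA'' q.1).1 (hA'' q.2).1).trans (hP q hq hq')

theorem exists_isOpen_closure_subset_ediam_le [PseudoMetricSpace X] {P : Set X} (hP : IsOpen P)
    (hPne : P.Nonempty) {ε : ℝ} (hε : 0 < ε) :
    ∃ V, IsOpen V ∧ V.Nonempty ∧ closure V ⊆ P ∧ ediam V ≤ ENNReal.ofReal ε := by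
  obtain ⟨x, hx⟩ := hPne
  obtain ⟨r, hr, hrP⟩ := Metric.isOpen_iff.1 hP x hx
  have hρ : 0 < min (r / 2) (ε / 2) := by positivity
  refine ⟨ball x (min (r / 2) (ε / 2)), isOpen_ball, nonempty_ball.2 hρ, ?_, ?_⟩
  · refine (closure_ball_subset_closedBall).trans ((closedBall_subset_ball ?_).trans hrP)
    linarith [min_le_left (r / 2) (ε / 2)]
  · refine ediam_le_of_forall_dist_le fun y hy z hz => (dist_triangle_right y z x).trans ?_
    rw [mem_ball] at hy hz
    linarith [min_le_right (r / 2) (ε / 2)]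

theorem exists_refinement_of_dense [PseudoMetricSpace X] {ι : Type*} {R : Set (X × X)}
    (hRo : IsOpen R) (hRd : Dense R) {P : ι → Set X} (hPo : ∀ i, IsOpen (P i))
    (hPne : ∀ i, (P i).Nonempty) {ε : ι → ℝ} (hε : ∀ i, 0 < ε i) {s : Set ι} (hs : s.Finite) :
    ∃ S : ι → Set X, (∀ i, IsOpen (S i) ∧ (S i).Nonempty ∧ closure (S i) ⊆ P i ∧
        ediam (S i) ≤ ENNReal.ofReal (ε i)) ∧ ∀ i ∈ s, ∀ j ∈ s, i ≠ j → S i ×ˢ S j ⊆ R := by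
  choose V hVo hVne hVP hVε using fun i =>
    exists_isOpen_closure_subset_ediam_le (hPo i) (hPne i) (hε i)
  obtain ⟨S, hSV, hSR⟩ :=
    exists_subset_forall_prod_subset_of_dense hRo hRd hVo hVne (hs.toFinset ×ˢ hs.toFinset)
  exact ⟨S, fun i => ⟨(hSV i).2.1, (hSV i).2.2, (closure_mono (hSV i).1).trans (hVP i),
    (ediam_mono (hSV i).1).trans (hVε i)⟩, fun i hi j hj hij => hSR (i, j) (by simp [hi, hj]) hij⟩

end Refinement

section Mycielski

variable {X : Type*} [PseudoMetricSpace X]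

/-- The cell `(n, w)` is the node `w` of the `n`-th Cantor scheme, created at stage
`n + w.length`; its parent is `B n` if `w = []` and the cell `(n, w.tail)` otherwise. -/
def parentSet (B : ℕ → Set X) (S : ℕ × List Bool → Set X) : ℕ × List Bool → Set X
  | (n, []) => B n
  | (n, _ :: w) => S (n, w)

def IsNextStage (B : ℕ → Set X) (R : Set (X × X)) (t : ℕ) (S S' : ℕ × List Bool → Set X) :
    Prop :=
  (∀ c, closure (S' c) ⊆ parentSet B S c ∧ ediam (S' c) ≤ ENNReal.ofReal (1 / (c.2.length + 1))) ∧
    ∀ c c', c.1 + c.2.length = t → c'.1 + c'.2.length = t → c ≠ c' → S' c ×ˢ S' c' ⊆ R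

theorem finite_setOf_add_length_eq (t : ℕ) :
    {c : ℕ × List Bool | c.1 + c.2.length = t}.Finite :=
  ((finite_Iic t).prod (List.finite_length_le Bool t)).subset fun c (hc : c.1 + c.2.length = t) =>
    ⟨show c.1 ≤ t by omega, show c.2.length ≤ t by omega⟩

theorem exists_isNextStage {B : ℕ → Set X} (hBo : ∀ n, IsOpen (B n))
    (hBne : ∀ n, (B n).Nonempty) {R : Set (X × X)} (hRo : IsOpen R) (hRd : Dense R) (t : ℕ)
    {S : ℕ × List Bool → Set X} (hS : ∀ c, IsOpen (S c) ∧ (S c).Nonempty) :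
    ∃ S', (∀ c, IsOpen (S' c) ∧ (S' c).Nonempty) ∧ IsNextStage B R t S S' := by
  have hP : ∀ c, IsOpen (parentSet B S c) ∧ (parentSet B S c).Nonempty := by
    rintro ⟨n, _ | ⟨b, w⟩⟩
    exacts [⟨hBo n, hBne n⟩, hS (n, w)]
  obtain ⟨S', hS', hR⟩ := exists_refinement_of_dense hRo hRd (fun c => (hP c).1)
    (fun c => (hP c).2) (fun _ => Nat.one_div_pos_of_nat) (finite_setOf_add_length_eq t)
  exact ⟨S', fun c => ⟨(hS' c).1, (hS' c).2.1⟩, fun c => (hS' c).2.2,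
    fun c c' hc hc' => hR c hc c' hc'⟩

theorem exists_res_ne_res {n m : ℕ} {σ τ : ℕ → Bool} (h : (n, σ) ≠ (m, τ)) (j : ℕ) :
    ∃ L L', j ≤ n + L ∧ n + L = m + L' ∧ (n, PiNat.res σ L) ≠ (m, PiNat.res τ L') := by
  by_cases hnm : n = m
  · subst hnm
    obtain ⟨i, hi⟩ := Function.ne_iff.1 fun hστ : σ = τ => h (by rw [hστ])
    refine ⟨i + 1 + j, i + 1 + j, by omega, rfl, fun hres => hi ?_⟩
    exact PiNat.res_eq_res.1 (Prod.ext_iff.1 hres).2 (show i < i + 1 + j by omega)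
  · exact ⟨m + j, n + j, by omega, by omega, fun hc => hnm (Prod.ext_iff.1 hc).1⟩

theorem exists_nat_bool_family_forall_mem_of_dense [CompleteSpace X] {B : ℕ → Set X}
    (hBo : ∀ n, IsOpen (B n)) (hBne : ∀ n, (B n).Nonempty) {R : ℕ → Set (X × X)}
    (hRo : ∀ j, IsOpen (R j)) (hRd : ∀ j, Dense (R j)) :
    ∃ h : ℕ → (ℕ → Bool) → X, (∀ n, Continuous (h n)) ∧ (∀ n σ, h n σ ∈ B n) ∧
      ∀ n σ m τ, (n, σ) ≠ (m, τ) → ∀ j, (h n σ, h m τ) ∈ R j := by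
  have hRt (t : ℕ) : IsOpen (⋂ j ∈ Iic t, R j) ∧ Dense (⋂ j ∈ Iic t, R j) :=
    ⟨(finite_Iic t).isOpen_biInter fun j _ => hRo j,
      dense_biInter_of_isOpen (fun j _ => hRo j) (to_countable _) fun j _ => hRd j⟩
  obtain ⟨F, hF⟩ := exists_seq_of_forall_exists_succ
    (r := fun t => IsNextStage B (⋂ j ∈ Iic t, R j) t) ⟨fun _ => B 0, fun _ => ⟨hBo 0, hBne 0⟩⟩
    fun t _ hS => exists_isNextStage hBo hBne (hRt t).1 (hRt t).2 t hS
  -- `F (t + 1)` holds the cells of stage `t`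
  let A : ℕ → List Bool → Set X := fun n w => F (n + w.length + 1) (n, w)
  have hanti : ∀ n, CantorScheme.ClosureAntitone (A n) := fun n w _ =>
    ((hF (n + w.length + 1)).2.1 _).1
  have hdiam : ∀ n, CantorScheme.VanishingDiam (A n) := fun n σ => by
    refine tendsto_of_tendsto_of_tendsto_of_le_of_le tendsto_const_nhds
      (ENNReal.ofReal_zero ▸ ENNReal.tendsto_ofReal tendsto_one_div_add_atTop_nhds_zero_nat)
      (fun _ => bot_le) fun L => ?_
    simpa [PiNat.res_length] using ((hF _).2.1 (n, PiNat.res σ L)).2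
  choose h hc hA using fun n =>
    CantorScheme.exists_continuous_forall_mem (hanti n) (hdiam n) fun w => ((hF _).1 _).2
  refine ⟨h, hc, fun n σ => ((hF n).2.1 (n, [])).1 (subset_closure (hA n σ 0)), ?_⟩
  intro n σ m τ hne j
  obtain ⟨L, L', hjL, hLL', hcell⟩ := exists_res_ne_res hne j
  have hσ := hA n σ L
  have hτ := hA m τ L'
  simp only [A, PiNat.res_length] at hσ hτ
  rw [← hLL'] at hτ
  exact mem_iInter₂.1 ((hF (n + L)).2.2 _ _ (by simp [PiNat.res_length])
    (by simp [PiNat.res_length, hLL']) hcell ⟨hσ, hτ⟩) j hjL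

end Mycielski

theorem exists_seq_isOpen_nonempty_subset (X : Type*) [TopologicalSpace X]
    [SecondCountableTopology X] [Nonempty X] :
    ∃ B : ℕ → Set X, (∀ n, IsOpen (B n)) ∧ (∀ n, (B n).Nonempty) ∧
      ∀ U, IsOpen U → U.Nonempty → ∃ n, B n ⊆ U := by
  obtain ⟨b, hbc, hb_empty, hb⟩ := TopologicalSpace.exists_countable_basis X
  obtain ⟨v, hv, -⟩ := hb.exists_subset_of_mem_open (mem_univ (Classical.arbitrary X)) isOpen_univ
  obtain ⟨B, rfl⟩ := hbc.exists_eq_range ⟨v, hv⟩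
  refine ⟨B, fun n => hb.isOpen ⟨n, rfl⟩,
    fun n => nonempty_iff_ne_empty.2 fun h => hb_empty ⟨n, h⟩, fun U hU ⟨x, hx⟩ => ?_⟩
  obtain ⟨_, ⟨n, rfl⟩, -, hn⟩ := hb.exists_subset_of_mem_open hx hU
  exact ⟨n, hn⟩

theorem isCantorSet_range {X : Type*} [TopologicalSpace X] [T2Space X] {h : (ℕ → Bool) → X}
    (hc : Continuous h) (hi : Injective h) : IsCantorSet (range h) :=
  ⟨(hc.isClosedEmbedding hi).isEmbedding.toHomeomorph⟩

theorem multiTrans_dense_Mycielski_scrambled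
    {X : Type*} [MetricSpace X] [CompactSpace X] [Nontrivial X]
    (f : X → X) (hf : Continuous f) (hmt : MultiTrans f) :
    ∃ δ : ℝ, 0 < δ ∧ ∃ C : Set X, Dense C ∧
      (∃ K : ℕ → Set X, (∀ n, IsCantorSet (K n)) ∧ C = ⋃ n, K n) ∧
      ∀ x ∈ C, ∀ y ∈ C, x ≠ y →
        δ < Filter.limsup (fun n => dist (f^[n] x) (f^[n] y)) Filter.atTop ∧
        Filter.liminf (fun n => dist (f^[n] x) (f^[n] y)) Filter.atTop = 0 := by
  obtain ⟨δ, hδ, hfar⟩ := hmt.exists_pos_frequently_lt_dist_iterate hf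
  obtain ⟨B, hBo, hBne, hB⟩ := exists_seq_isOpen_nonempty_subset X
  let R (j : ℕ) := orbitDistPairs f (Iio (1 / (j + 1 : ℝ))) j ∩ orbitDistPairs f (Ioi δ) j
  have hRo (j : ℕ) : IsOpen (R j) :=
    (isOpen_orbitDistPairs hf isOpen_Iio j).inter (isOpen_orbitDistPairs hf isOpen_Ioi j)
  have hRd (j : ℕ) : Dense (R j) :=
    (dense_orbitDistPairs (fun U V hU hV hUne hVne => hmt.frequently_dist_iterate_lt hf hU hV
      hUne hVne Nat.one_div_pos_of_nat) j).inter_of_isOpen_left (dense_orbitDistPairs hfar j)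
      (isOpen_orbitDistPairs hf isOpen_Iio j)
  obtain ⟨h, hc, hhB, hhR⟩ := exists_nat_bool_family_forall_mem_of_dense hBo hBne hRo hRd
  have hsep {n σ m τ} (hne : (n, σ) ≠ (m, τ)) : h n σ ≠ h m τ := fun heq => by
    obtain ⟨k, -, hk⟩ := (hhR n σ m τ hne 0).2
    rw [heq, dist_self] at hk
    exact hδ.not_gt hk
  refine ⟨δ / 2, half_pos hδ, ⋃ n, range (h n), ?_,
    ⟨_, fun n => isCantorSet_range (hc n) fun σ τ hστ => ?_, rfl⟩, ?_⟩
  · refine dense_iff_inter_open.2 fun U hU hUne => ?_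
    obtain ⟨n, hn⟩ := hB U hU hUne
    exact ⟨h n fun _ => false, hn (hhB n _), mem_iUnion.2 ⟨n, mem_range_self _⟩⟩
  · by_contra hne
    exact hsep (by simpa using hne) hστ
  · rintro _ ⟨_, ⟨n, rfl⟩, σ, rfl⟩ _ ⟨_, ⟨m, rfl⟩, τ, rfl⟩ hne
    have hR := hhR n σ m τ (by rintro ⟨⟩; exact hne rfl)
    exact ⟨(half_lt_self hδ).trans_le (le_limsup_dist_iterate fun j => (hR j).2),
      liminf_dist_iterate_eq_zero fun j => (hR j).1⟩
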